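/- arXiv:1907.07256 — 3 statements merged into one kernel-verified Lean document; each statement's English description precedes it below -/
import Mathlib

section
/- Let A be a supercommutative superalgebra and let p, q be natural numbers. Let X = [[A,B],[C,D]] be an even invertible supermatrix of format p|q over A. Then its supertranspose X^{st} = [[Aᵗ, Cᵗ],[−Bᵗ, Dᵗ]] is again an even invertible supermatrix and Ber(X^{st}) = Ber(X); explicitly, det(Aᵗ + Cᵗ·(Dᵗ)⁻¹·Bᵗ)·det(Dᵗ)⁻¹ = det(A − B·D⁻¹·C)·det(D)⁻¹. -/
open Matrix

/-- A supercommutative superalgebra structure on a ring `A`: a `ℤ/2`-grading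
`A = A₀ ⊕ A₁` (with `A₀` a subring and `A₁` an additive subgroup) satisfying the
sign rule `a * b = (-1)^{|a||b|} * (b * a)` for homogeneous elements `a`, `b`. -/
structure SuperComm (A : Type*) [Ring A] where
  even : Subring A
  odd : AddSubgroup A
  decompose : ∀ a : A, ∃ a₀ ∈ even, ∃ a₁ ∈ odd, a = a₀ + a₁
  indep : ∀ a : A, a ∈ even → a ∈ odd → a = 0
  odd_mul_odd : ∀ a ∈ odd, ∀ b ∈ odd, a * b ∈ even
  even_mul_odd : ∀ a ∈ even, ∀ b ∈ odd, a * b ∈ odd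
  odd_mul_even : ∀ a ∈ odd, ∀ b ∈ even, a * b ∈ odd
  even_comm : ∀ a ∈ even, ∀ b ∈ even, a * b = b * a
  even_odd_comm : ∀ a ∈ even, ∀ b ∈ odd, a * b = b * a
  odd_anticomm : ∀ a ∈ odd, ∀ b ∈ odd, a * b = -(b * a)

/-- The even part `A₀` is a commutative ring. -/
instance SuperComm.instCommRingEven {A : Type*} [Ring A] (S : SuperComm A) :
    CommRing S.even :=
  { (inferInstance : Ring S.even) with
    mul_comm := fun a b => Subtype.ext (S.even_comm a.1 a.2 b.1 b.2) }

/-- Restriction of a matrix all of whose entries lie in the even part `A₀` to a matrix over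
the commutative ring `A₀` (entries not lying in `A₀` are sent to the junk value `0`). -/
noncomputable def SuperComm.res {A : Type*} [Ring A] (S : SuperComm A) {n m : Type*}
    (M : Matrix n m A) : Matrix n m S.even :=
  Matrix.of fun i j =>
    letI := Classical.propDecidable (M i j ∈ S.even)
    if h : M i j ∈ S.even then (⟨M i j, h⟩ : S.even) else 0

/-- The Berezinian of a supermatrix `X = [[A,B],[C,D]]` of format `p|q`:
`Ber X = det (A - B * D⁻¹ * C) * (det D)⁻¹`, an element of the even part `A₀`. -/
noncomputable def SuperComm.ber {A : Type*} [Ring A] (S : SuperComm A) {p q : ℕ}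
    (X : Matrix (Fin p ⊕ Fin q) (Fin p ⊕ Fin q) A) : S.even :=
  (S.res (X.toBlocks₁₁ - X.toBlocks₁₂ * Ring.inverse X.toBlocks₂₂ * X.toBlocks₂₁)).det *
    Ring.inverse ((S.res X.toBlocks₂₂).det)

/-! The supertranspose is an anti-homomorphism on even supermatrices: the sign it puts on the
odd-by-even block is exactly what absorbs the Koszul signs from commuting homogeneous entries.
Projecting an inverse onto its even part shows that the inverse of an even supermatrix is even,
so the supertranspose of `X⁻¹` inverts `Xˢᵗ`. For the Berezinian, the same rule gives
`(P - Q D⁻¹ R)ᵀ = Pᵀ + Rᵀ (Dᵀ)⁻¹ Qᵀ`, and the determinant over the commutative ring `A₀`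
is invariant under transposition. -/

/-- The Koszul sign `(-1) ^ (a * b)` of two parities (`true` is odd). -/
def koszulSign (a b : Bool) : ℤ := if a && b then -1 else 1

/-- The supertranspose of a matrix whose rows and columns carry parities `dm` and `dn`:
the entry in position `(j, i)` is `M i j`, negated when `j` is odd and `i` is even. -/
def Matrix.superTranspose {A m n : Type*} [Ring A] (dm : m → Bool) (dn : n → Bool)
    (M : Matrix m n A) : Matrix n m A :=
  of fun j i => koszulSign (dn j) (!dm i) • M i j

namespace Matrix

variable {A : Type*} [Ring A] {m n m' n' : Type*}

@[simp]
lemma superTranspose_const (a b : Bool) (M : Matrix m n A) :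
    superTranspose (fun _ => a) (fun _ => b) M = koszulSign b (!a) • Mᵀ :=
  rfl

lemma superTranspose_sub (dm : m → Bool) (dn : n → Bool) (M N : Matrix m n A) :
    superTranspose dm dn (M - N) = superTranspose dm dn M - superTranspose dm dn N := by
  ext j i
  simp [superTranspose, smul_sub]

lemma superTranspose_one [DecidableEq m] (d : m → Bool) :
    superTranspose d d (1 : Matrix m m A) = 1 := by
  ext i j
  rcases eq_or_ne i j with rfl | hij
  · simp [superTranspose, koszulSign]
  · simp [superTranspose, one_apply_ne hij.symm, one_apply_ne hij]

lemma superTranspose_fromBlocks (dm : m → Bool) (dn : n → Bool) (dm' : m' → Bool)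
    (dn' : n' → Bool) (P : Matrix m m' A) (Q : Matrix m n' A) (R : Matrix n m' A)
    (D : Matrix n n' A) :
    superTranspose (Sum.elim dm dn) (Sum.elim dm' dn') (fromBlocks P Q R D) =
      fromBlocks (superTranspose dm dm' P) (superTranspose dn dm' R)
        (superTranspose dm dn' Q) (superTranspose dn dn' D) := by
  ext (j | j) (i | i) <;> rfl

end Matrix

namespace SuperComm

variable {A : Type*} [Ring A] {S : SuperComm A} {l m n m' n' : Type*}

variable (S) in
def grade (b : Bool) : AddSubgroup A := cond b S.odd S.even.toAddSubgroup

@[simp]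
lemma mem_grade_false {x : A} : x ∈ S.grade false ↔ x ∈ S.even := Iff.rfl

@[simp]
lemma mem_grade_true {x : A} : x ∈ S.grade true ↔ x ∈ S.odd := Iff.rfl

lemma mul_mem_grade {x y : A} {a b : Bool} (hx : x ∈ S.grade a) (hy : y ∈ S.grade b) :
    x * y ∈ S.grade (a ^^ b) := by
  cases a <;> cases b <;> simp only [mem_grade_false, mem_grade_true] at hx hy ⊢
  · exact S.even.mul_mem hx hy
  · exact S.even_mul_odd x hx y hy
  · exact S.odd_mul_even x hx y hy
  · exact S.odd_mul_odd x hx y hy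

lemma mul_comm_of_mem_grade {x y : A} {a b : Bool} (hx : x ∈ S.grade a)
    (hy : y ∈ S.grade b) : x * y = koszulSign a b • (y * x) := by
  cases a <;> cases b <;> simp only [mem_grade_false, mem_grade_true] at hx hy <;>
    simp only [koszulSign, Bool.and_false, Bool.and_true, Bool.false_eq_true, ite_false,
      ite_true, one_smul, neg_smul]
  · exact S.even_comm x hx y hy
  · exact S.even_odd_comm x hx y hy
  · exact (S.even_odd_comm y hy x hx).symm
  · exact S.odd_anticomm x hx y hy

lemma eq_zero_of_mem_grade_of_mem_grade_not {x : A} {b : Bool} (h : x ∈ S.grade b)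
    (h' : x ∈ S.grade (!b)) : x = 0 := by
  cases b
  · exact S.indep x h h'
  · exact S.indep x h' h

lemma exists_mem_grade_sub_mem_grade_not (b : Bool) (x : A) :
    ∃ z ∈ S.grade b, x - z ∈ S.grade (!b) := by
  obtain ⟨x₀, hx₀, x₁, hx₁, rfl⟩ := S.decompose x
  cases b
  · exact ⟨x₀, hx₀, by simpa using hx₁⟩
  · exact ⟨x₁, hx₁, by simpa using hx₀⟩

variable (S) in
noncomputable def proj (b : Bool) (x : A) : A :=
  (exists_mem_grade_sub_mem_grade_not (S := S) b x).choose

lemma proj_mem (b : Bool) (x : A) : S.proj b x ∈ S.grade b :=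
  (exists_mem_grade_sub_mem_grade_not b x).choose_spec.1

lemma sub_proj_mem (b : Bool) (x : A) : x - S.proj b x ∈ S.grade (!b) :=
  (exists_mem_grade_sub_mem_grade_not b x).choose_spec.2

lemma proj_eq_of_mem {b : Bool} {x z : A} (hz : z ∈ S.grade b) (h : x - z ∈ S.grade (!b)) :
    S.proj b x = z := by
  have h₁ : S.proj b x - z ∈ S.grade b := sub_mem (proj_mem b x) hz
  have h₂ : S.proj b x - z ∈ S.grade (!b) := by
    simpa using sub_mem h (sub_proj_mem b x)
  exact sub_eq_zero.mp (eq_zero_of_mem_grade_of_mem_grade_not h₁ h₂)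

variable (S) in
def IsEvenMatrix (dm : m → Bool) (dn : n → Bool) (M : Matrix m n A) : Prop :=
  ∀ i j, M i j ∈ S.grade (dm i ^^ dn j)

variable (S) in
noncomputable def evenPart (dm : m → Bool) (dn : n → Bool) (M : Matrix m n A) : Matrix m n A :=
  of fun i j => S.proj (dm i ^^ dn j) (M i j)

lemma isEvenMatrix_zero (dm : m → Bool) (dn : n → Bool) : S.IsEvenMatrix dm dn 0 :=
  fun _ _ => zero_mem _

lemma isEvenMatrix_one [DecidableEq m] (d : m → Bool) : S.IsEvenMatrix d d 1 := by
  intro i j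
  rcases eq_or_ne i j with rfl | hij
  · simp
  · simp [one_apply_ne hij]

lemma IsEvenMatrix.mul [Fintype m] {dl : l → Bool} {dm : m → Bool} {dn : n → Bool}
    {M : Matrix l m A} {N : Matrix m n A} (hM : S.IsEvenMatrix dl dm M)
    (hN : S.IsEvenMatrix dm dn N) : S.IsEvenMatrix dl dn (M * N) := fun i j =>
  sum_mem fun k _ => by simpa using mul_mem_grade (hM i k) (hN k j)

lemma IsEvenMatrix.fromBlocks {dm : m → Bool} {dn : n → Bool} {dm' : m' → Bool}
    {dn' : n' → Bool} {P : Matrix m m' A} {Q : Matrix m n' A} {R : Matrix n m' A}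
    {D : Matrix n n' A} (hP : S.IsEvenMatrix dm dm' P) (hQ : S.IsEvenMatrix dm dn' Q)
    (hR : S.IsEvenMatrix dn dm' R) (hD : S.IsEvenMatrix dn dn' D) :
    S.IsEvenMatrix (Sum.elim dm dn) (Sum.elim dm' dn') (fromBlocks P Q R D) := by
  rintro (i | i) (j | j)
  exacts [hP i j, hQ i j, hR i j, hD i j]

lemma isEvenMatrix_evenPart (dm : m → Bool) (dn : n → Bool) (M : Matrix m n A) :
    S.IsEvenMatrix dm dn (S.evenPart dm dn M) :=
  fun _ _ => proj_mem _ _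

lemma isEvenMatrix_sub_evenPart (dm : m → Bool) (dn : n → Bool) (M : Matrix m n A) :
    S.IsEvenMatrix dm (fun j => !dn j) (M - S.evenPart dm dn M) :=
  fun i j => by simpa [evenPart] using sub_proj_mem (S := S) (dm i ^^ dn j) (M i j)

lemma evenPart_eq_self {dm : m → Bool} {dn : n → Bool} {M : Matrix m n A}
    (hM : S.IsEvenMatrix dm dn M) : S.evenPart dm dn M = M := by
  ext i j
  exact proj_eq_of_mem (hM i j) (by simp)

lemma evenPart_mul_of_isEvenMatrix [Fintype m] {dl : l → Bool} {dm : m → Bool}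
    {dn : n → Bool} {M : Matrix l m A} (hM : S.IsEvenMatrix dl dm M) (N : Matrix m n A) :
    S.evenPart dl dn (M * N) = M * S.evenPart dm dn N := by
  ext i j
  refine proj_eq_of_mem ((hM.mul (isEvenMatrix_evenPart dm dn N)) i j) ?_
  simpa [Matrix.mul_sub] using (hM.mul (isEvenMatrix_sub_evenPart dm dn N)) i j

/-- The even part of the inverse of an even matrix is again an inverse, so the inverse is even. -/
lemma isEvenMatrix_ring_inverse [Fintype m] [DecidableEq m] {d : m → Bool}
    {M : Matrix m m A} (hM : S.IsEvenMatrix d d M) : S.IsEvenMatrix d d (Ring.inverse M) := by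
  by_cases hu : IsUnit M
  · have hright : M * S.evenPart d d (Ring.inverse M) = 1 := by
      rw [← evenPart_mul_of_isEvenMatrix hM, Ring.mul_inverse_cancel _ hu,
        evenPart_eq_self (isEvenMatrix_one d)]
    rw [left_inv_eq_right_inv (Ring.inverse_mul_cancel _ hu) hright]
    exact isEvenMatrix_evenPart d d _
  · rw [Ring.inverse_non_unit _ hu]
    exact isEvenMatrix_zero d d

/-- The Koszul sign of commuting `x` past `y` is the one `superTranspose` inserts. -/
lemma koszulSign_smul_mul {x y : A} {a b c : Bool} (hx : x ∈ S.grade (a ^^ b))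
    (hy : y ∈ S.grade (b ^^ c)) :
    koszulSign c (!a) • (x * y) = (koszulSign c (!b) • y) * (koszulSign b (!a) • x) := by
  rw [mul_comm_of_mem_grade hx hy, smul_mul_smul_comm, smul_smul]
  congr 1
  cases a <;> cases b <;> cases c <;> decide

lemma superTranspose_mul [Fintype m] {dl : l → Bool} {dm : m → Bool} {dn : n → Bool}
    {M : Matrix l m A} {N : Matrix m n A} (hM : S.IsEvenMatrix dl dm M)
    (hN : S.IsEvenMatrix dm dn N) :
    superTranspose dl dn (M * N) = superTranspose dm dn N * superTranspose dl dm M := by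
  ext j i
  simp only [superTranspose, of_apply, mul_apply, Finset.smul_sum]
  exact Finset.sum_congr rfl fun k _ => koszulSign_smul_mul (hM i k) (hN k j)

section Square

variable [Fintype m] [DecidableEq m] {d : m → Bool} {M : Matrix m m A}

lemma isUnit_superTranspose (hM : S.IsEvenMatrix d d M) (hu : IsUnit M) :
    IsUnit (superTranspose d d M) := by
  have hinv := isEvenMatrix_ring_inverse hM
  refine ⟨⟨superTranspose d d M, superTranspose d d (Ring.inverse M), ?_, ?_⟩, rfl⟩
  · rw [← superTranspose_mul hinv hM, Ring.inverse_mul_cancel _ hu, superTranspose_one]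
  · rw [← superTranspose_mul hM hinv, Ring.mul_inverse_cancel _ hu, superTranspose_one]

lemma ring_inverse_superTranspose (hM : S.IsEvenMatrix d d M) (hu : IsUnit M) :
    Ring.inverse (superTranspose d d M) = superTranspose d d (Ring.inverse M) :=
  left_inv_eq_right_inv (Ring.inverse_mul_cancel _ (isUnit_superTranspose hM hu)) <| by
    rw [← superTranspose_mul (isEvenMatrix_ring_inverse hM) hM, Ring.inverse_mul_cancel _ hu,
      superTranspose_one]

lemma ring_inverse_transpose (hM : ∀ i j, M i j ∈ S.even) :
    Ring.inverse Mᵀ = (Ring.inverse M)ᵀ := by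
  have hM' : S.IsEvenMatrix (fun _ => false) (fun _ => false) M := by simpa [IsEvenMatrix]
  by_cases hu : IsUnit M
  · simpa [koszulSign] using ring_inverse_superTranspose hM' hu
  · have hu' : ¬IsUnit Mᵀ := fun h => hu <| by
      simpa [koszulSign] using isUnit_superTranspose (M := Mᵀ) (fun i j => hM' j i) h
    rw [Ring.inverse_non_unit _ hu, Ring.inverse_non_unit _ hu', transpose_zero]

end Square

lemma res_transpose (M : Matrix m n A) : S.res Mᵀ = (S.res M)ᵀ :=
  rfl

lemma transpose_sub_mul_ring_inverse_mul [Fintype n] [DecidableEq n] (P : Matrix m m A)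
    {Q : Matrix m n A} {R : Matrix n m A} {D : Matrix n n A} (hQ : ∀ i j, Q i j ∈ S.odd)
    (hR : ∀ i j, R i j ∈ S.odd) (hD : ∀ i j, D i j ∈ S.even) :
    (P - Q * Ring.inverse D * R)ᵀ = Pᵀ + Rᵀ * Ring.inverse Dᵀ * Qᵀ := by
  have hQ' : S.IsEvenMatrix (fun _ => false) (fun _ => true) Q := by simpa [IsEvenMatrix]
  have hR' : S.IsEvenMatrix (fun _ => true) (fun _ => false) R := by simpa [IsEvenMatrix]
  have hD' : S.IsEvenMatrix (fun _ => true) (fun _ => true) (Ring.inverse D) :=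
    isEvenMatrix_ring_inverse (by simpa [IsEvenMatrix])
  calc (P - Q * Ring.inverse D * R)ᵀ
      = superTranspose (fun _ => false) (fun _ => false) (P - Q * Ring.inverse D * R) := by
        simp [koszulSign]
    _ = Pᵀ + Rᵀ * Ring.inverse Dᵀ * Qᵀ := by
        rw [superTranspose_sub, superTranspose_mul (hQ'.mul hD') hR', superTranspose_mul hQ' hD']
        simp [koszulSign, ring_inverse_transpose hD, Matrix.mul_assoc]

end SuperComm

open SuperComm in
/-- for an even invertible supermatrix `X = [[P,Q],[R,D]]` of format `p|q`,
its supertranspose `X^st = [[Pᵀ, Rᵀ],[-Qᵀ, Dᵀ]]` is again an even invertible supermatrix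
with `Ber (X^st) = Ber X`; explicitly,
`det (Pᵀ + Rᵀ * (Dᵀ)⁻¹ * Qᵀ) * (det Dᵀ)⁻¹ = det (P - Q * D⁻¹ * R) * (det D)⁻¹`. -/
theorem berezinian_superTranspose {A : Type*} [Ring A] (S : SuperComm A) (p q : ℕ)
    (P : Matrix (Fin p) (Fin p) A) (Q : Matrix (Fin p) (Fin q) A)
    (R : Matrix (Fin q) (Fin p) A) (D : Matrix (Fin q) (Fin q) A)
    (hP : ∀ i j, P i j ∈ S.even) (hD : ∀ i j, D i j ∈ S.even)
    (hQ : ∀ i j, Q i j ∈ S.odd) (hR : ∀ i j, R i j ∈ S.odd)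
    (hXu : IsUnit (Matrix.fromBlocks P Q R D)) :
    (∀ i j, Pᵀ i j ∈ S.even) ∧ (∀ i j, Dᵀ i j ∈ S.even) ∧
    (∀ i j, Rᵀ i j ∈ S.odd) ∧ (∀ i j, (-Qᵀ) i j ∈ S.odd) ∧
    IsUnit (Matrix.fromBlocks Pᵀ Rᵀ (-Qᵀ) Dᵀ) ∧
    S.ber (Matrix.fromBlocks Pᵀ Rᵀ (-Qᵀ) Dᵀ) = S.ber (Matrix.fromBlocks P Q R D) ∧
    (S.res (Pᵀ + Rᵀ * Ring.inverse Dᵀ * Qᵀ)).det * Ring.inverse ((S.res Dᵀ).det) =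
      (S.res (P - Q * Ring.inverse D * R)).det * Ring.inverse ((S.res D).det) := by
  let d := Sum.elim (fun _ : Fin p => false) (fun _ : Fin q => true)
  have hX : S.IsEvenMatrix d d (fromBlocks P Q R D) :=
    IsEvenMatrix.fromBlocks (by simpa [IsEvenMatrix]) (by simpa [IsEvenMatrix])
      (by simpa [IsEvenMatrix]) (by simpa [IsEvenMatrix])
  have hst : superTranspose d d (fromBlocks P Q R D) = fromBlocks Pᵀ Rᵀ (-Qᵀ) Dᵀ := by
    simp [d, superTranspose_fromBlocks, koszulSign]
  have hexplicit :
      (S.res (Pᵀ + Rᵀ * Ring.inverse Dᵀ * Qᵀ)).det * Ring.inverse ((S.res Dᵀ).det) =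
        (S.res (P - Q * Ring.inverse D * R)).det * Ring.inverse ((S.res D).det) := by
    rw [← transpose_sub_mul_ring_inverse_mul P hQ hR hD, res_transpose, det_transpose,
      res_transpose, det_transpose]
  refine ⟨fun i j => hP j i, fun i j => hD j i, fun i j => hR j i,
    fun i j => S.odd.neg_mem (hQ j i), hst ▸ isUnit_superTranspose hX hXu, ?_, hexplicit⟩
  simpa [ber, sub_neg_eq_add] using hexplicit
end

section
/- Let A be a supercommutative superalgebra over a field of characteristic zero. Let f, g ∈ A⟦x⟧ be formal power series all of whose coefficients lie in the even part A₀, and let λ, ψ ∈ A⟦x⟧ be formal power series all of whose coefficients lie in the odd part A₁. Assume the superconformality conditions: (i) λ = f·g·ψ, and (ii) f·g² + λ·ψ·g = x·f′ − x·f·ψ·ψ′, where (·)′ denotes the formal derivative. Assume further that the constant coefficient of f vanishes, f(0) = 0, and that the coefficient of x in f, denoted f′(0), is an invertible element of A. Then the constant coefficient g(0) of g satisfies g(0)² = 1. -/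
/-- The formal derivative of a power series over a (possibly noncommutative) ring. -/
noncomputable def psDeriv {A : Type*} [Ring A] (f : PowerSeries A) : PowerSeries A :=
  PowerSeries.mk fun n => ((n : A) + 1) * PowerSeries.coeff (n + 1) f

/-! Compare the coefficients of `x` in (ii). Since `f(0) = 0`, the left side contributes
`f′(0) g(0)² + f′(0) g(0) ψ(0)² g(0)`, the right side `f′(0)`. The odd element `ψ(0)`
anticommutes with itself, so `2 ψ(0)² = 0`, and `2` is invertible in a `K`-algebra with
`char K = 0`; hence `f′(0) g(0)² = f′(0)`, and `f′(0)` cancels. -/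

open PowerSeries

theorem SuperComm.mul_self_eq_zero_of_mem_odd {A : Type*} [Ring A] (S : SuperComm A)
    (h2 : IsUnit (2 : A)) {a : A} (ha : a ∈ S.odd) : a * a = 0 := by
  refine h2.mul_left_cancel ?_
  rw [mul_zero, two_mul, add_eq_zero_iff_eq_neg]
  exact S.odd_anticomm a ha a ha

namespace PowerSeries

variable {R : Type*} [Semiring R]

theorem coeff_zero_mul (φ ψ : R⟦X⟧) : coeff 0 (φ * ψ) = coeff 0 φ * coeff 0 ψ := by
  simp

theorem coeff_one_mul' (φ ψ : R⟦X⟧) :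
    coeff 1 (φ * ψ) = coeff 0 φ * coeff 1 ψ + coeff 1 φ * coeff 0 ψ := by
  rw [coeff_mul, Finset.Nat.antidiagonal_succ]
  simp

end PowerSeries

theorem coeff_zero_psDeriv {R : Type*} [Ring R] (f : R⟦X⟧) :
    coeff 0 (psDeriv f) = coeff 1 f := by
  simp [psDeriv]

theorem coeff_one_mul_coeff_zero_sq_of_superconformal {A : Type*} [Ring A]
    {f g lam ψ : A⟦X⟧} (hψ0 : coeff 0 ψ * coeff 0 ψ = 0) (h1 : lam = f * g * ψ)
    (h2 : f * g ^ 2 + lam * ψ * g = X * psDeriv f - X * f * ψ * psDeriv ψ)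
    (hf0 : coeff 0 f = 0) :
    coeff 1 f * coeff 0 g ^ 2 = coeff 1 f := by
  have key := congrArg (coeff 1) h2
  simp only [h1, map_add, map_sub, mul_assoc, coeff_succ_X_mul, coeff_one_mul',
    coeff_zero_mul, coeff_zero_psDeriv, hf0, pow_two] at key
  have hψψ (a : A) : coeff 0 ψ * (coeff 0 ψ * a) = 0 := by rw [← mul_assoc, hψ0, zero_mul]
  simpa only [hψψ, zero_mul, mul_zero, zero_add, add_zero, sub_zero, pow_two] using key

theorem superconformal_g_sq_eq_one_general {K A : Type*} [Field K] [CharZero K] [Ring A]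
    [Algebra K A] (S : SuperComm A) (f g lam ψ : PowerSeries A)
    (hψ : ∀ n : ℕ, PowerSeries.coeff n ψ ∈ S.odd)
    (h1 : lam = f * g * ψ)
    (h2 : f * g ^ 2 + lam * ψ * g =
      PowerSeries.X * psDeriv f - PowerSeries.X * f * ψ * psDeriv ψ)
    (hf0 : PowerSeries.coeff 0 f = 0)
    (hf1 : IsUnit (PowerSeries.coeff 1 f)) :
    PowerSeries.coeff 0 g ^ 2 = 1 := by
  have two_isUnit : IsUnit (2 : A) := by
    simpa only [map_ofNat] using (IsUnit.mk0 (2 : K) two_ne_zero).map (algebraMap K A)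
  have hψ0 := S.mul_self_eq_zero_of_mem_odd two_isUnit (hψ 0)
  refine hf1.mul_left_cancel ?_
  rw [mul_one]
  exact coeff_one_mul_coeff_zero_sq_of_superconformal hψ0 h1 h2 hf0

/-- let `A` be a supercommutative superalgebra over a field of characteristic
zero, `f, g ∈ A⟦x⟧` with all coefficients even and `λ, ψ ∈ A⟦x⟧` with all coefficients
odd. Assume the superconformality conditions (i) `λ = f * g * ψ` and
(ii) `f * g² + λ * ψ * g = x * f′ - x * f * ψ * ψ′`, that `f(0) = 0`, and that `f′(0)`
(the coefficient of `x` in `f`) is invertible. Then `g(0)² = 1`. -/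
theorem superconformal_g_sq_eq_one {K A : Type*} [Field K] [CharZero K] [Ring A]
    [Algebra K A] (S : SuperComm A) (f g lam ψ : PowerSeries A)
    (hf : ∀ n : ℕ, PowerSeries.coeff n f ∈ S.even)
    (hg : ∀ n : ℕ, PowerSeries.coeff n g ∈ S.even)
    (hlam : ∀ n : ℕ, PowerSeries.coeff n lam ∈ S.odd)
    (hψ : ∀ n : ℕ, PowerSeries.coeff n ψ ∈ S.odd)
    (h1 : lam = f * g * ψ)
    (h2 : f * g ^ 2 + lam * ψ * g =
      PowerSeries.X * psDeriv f - PowerSeries.X * f * ψ * psDeriv ψ)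
    (hf0 : PowerSeries.coeff 0 f = 0)
    (hf1 : IsUnit (PowerSeries.coeff 1 f)) :
    PowerSeries.coeff 0 g ^ 2 = 1 :=
  superconformal_g_sq_eq_one_general (K := K) S f g lam ψ hψ h1 h2 hf0 hf1
end

section
/- Let A be a supercommutative superalgebra. Let a, b, b' ∈ A₀ with a invertible and b² = 1, and let p, p', l ∈ A₁ with l·p = 0. Consider the even supermatrix of format 2|2 given in block form by M = [[P, Q],[R, S]] with blocks P = [[1, 0],[0, a]], Q = [[p, 0],[p', a·p]], R = [[0, 0],[0, l]], S = [[b, 0],[b', a·b]]. Then M is invertible and Ber M = 1, i.e. det(P − Q·S⁻¹·R)·det(S)⁻¹ = 1. -/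
open Matrix

/-!
The odd–odd correction `Q S⁻¹ R` vanishes: its only nonzero entry is `a p (ab)⁻¹ l`, and `(ab)⁻¹`
is even, hence central, so this equals `a (ab)⁻¹ (p l) = 0` because `p l = -(l p) = 0`. Thus the
Schur complement is `P`; both `P` and `S` are lower triangular with determinant `a` (using
`b² = 1`), so `Ber M = a a⁻¹ = 1`. Invertibility of `M` comes from the factorisation
`M = [[1, Q S⁻¹], [0, 1]] · diag(P - Q S⁻¹ R, S) · [[1, 0], [S⁻¹ R, 1]]`, valid over any ring.
-/

namespace Matrix

variable {m n R : Type*} [Fintype m] [Fintype n] [DecidableEq m] [DecidableEq n] [Ring R]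

theorem isUnit_fromBlocks_one_zero₂₁_one (X : Matrix m n R) :
    IsUnit (fromBlocks 1 X 0 1 : Matrix (m ⊕ n) (m ⊕ n) R) :=
  (⟨fromBlocks 1 X 0 1, fromBlocks 1 (-X) 0 1, by simp [fromBlocks_multiply, fromBlocks_one],
    by simp [fromBlocks_multiply, fromBlocks_one]⟩ : (Matrix (m ⊕ n) (m ⊕ n) R)ˣ).isUnit

theorem isUnit_fromBlocks_one_zero₁₂_one (X : Matrix n m R) :
    IsUnit (fromBlocks 1 0 X 1 : Matrix (m ⊕ n) (m ⊕ n) R) :=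
  (⟨fromBlocks 1 0 X 1, fromBlocks 1 0 (-X) 1, by simp [fromBlocks_multiply, fromBlocks_one],
    by simp [fromBlocks_multiply, fromBlocks_one]⟩ : (Matrix (m ⊕ n) (m ⊕ n) R)ˣ).isUnit

theorem isUnit_fromBlocks_zero₁₂_zero₂₁ {A : Matrix m m R} {D : Matrix n n R} (hA : IsUnit A)
    (hD : IsUnit D) : IsUnit (fromBlocks A 0 0 D) := by
  obtain ⟨u, rfl⟩ := hA
  obtain ⟨v, rfl⟩ := hD
  exact (⟨fromBlocks u 0 0 v, fromBlocks ↑u⁻¹ 0 0 ↑v⁻¹,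
    by simp [fromBlocks_multiply, fromBlocks_one], by simp [fromBlocks_multiply, fromBlocks_one]⟩ :
      (Matrix (m ⊕ n) (m ⊕ n) R)ˣ).isUnit

theorem isUnit_fromBlocks_of_isUnit_schur {A : Matrix m m R} {B : Matrix m n R}
    {C : Matrix n m R} {D : Matrix n n R} (hD : IsUnit D)
    (hS : IsUnit (A - B * Ring.inverse D * C)) : IsUnit (fromBlocks A B C D) := by
  obtain ⟨u, rfl⟩ := hD
  set E : Matrix n n R := ↑u⁻¹
  rw [Ring.inverse_unit] at hS
  have hfactor : fromBlocks A B C u =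
      fromBlocks 1 (B * E) 0 1 * fromBlocks (A - B * E * C) 0 0 u * fromBlocks 1 0 (E * C) 1 := by
    simp only [E, fromBlocks_multiply, fromBlocks_inj, Matrix.mul_assoc, Units.inv_mul,
      Matrix.one_mul, Matrix.mul_one, Matrix.mul_zero, Matrix.zero_mul, add_zero, zero_add,
      sub_add_cancel, and_true, true_and]
    rw [← Matrix.mul_assoc, u.mul_inv, Matrix.one_mul]
  rw [hfactor]
  exact ((isUnit_fromBlocks_one_zero₂₁_one _).mul (isUnit_fromBlocks_zero₁₂_zero₂₁ hS u.isUnit)).mul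
    (isUnit_fromBlocks_one_zero₁₂_one _)

def unitOfLowerTriangularFinTwo (x w : Rˣ) (z : R) : (Matrix (Fin 2) (Fin 2) R)ˣ where
  val := !![(x : R), 0; z, w]
  inv := !![↑x⁻¹, 0; -(↑w⁻¹ * z * ↑x⁻¹), ↑w⁻¹]
  val_inv := by simp [one_fin_two, mul_assoc]
  inv_val := by simp [one_fin_two, mul_assoc]

end Matrix

namespace SuperComm

variable {A : Type*} [Ring A] (S : SuperComm A)

theorem commute_of_mem_even {x : A} (hx : x ∈ S.even) (y : A) : Commute x y := by
  obtain ⟨y₀, hy₀, y₁, hy₁, rfl⟩ := S.decompose y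
  exact Commute.add_right (S.even_comm x hx y₀ hy₀) (S.even_odd_comm x hx y₁ hy₁)

theorem inv_mem_even {u : Aˣ} (hu : (u : A) ∈ S.even) : ((u⁻¹ : Aˣ) : A) ∈ S.even := by
  obtain ⟨e, he, o, ho, hdec⟩ := S.decompose ↑u⁻¹
  have hu_mul_odd : (u : A) * o = 1 - u * e := by
    rw [eq_sub_iff_add_eq', ← mul_add, ← hdec, u.mul_inv]
  have huo : (u : A) * o = 0 :=
    S.indep _ (hu_mul_odd ▸ sub_mem S.even.one_mem (S.even.mul_mem hu he))
      (S.even_mul_odd _ hu o ho)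
  have ho : o = 0 := by rw [← u.inv_mul_cancel_left o, huo, mul_zero]
  rwa [hdec, ho, add_zero]

theorem isUnit_mk_of_isUnit {x : A} (hx : x ∈ S.even) (hu : IsUnit x) :
    IsUnit (⟨x, hx⟩ : S.even) := by
  obtain ⟨u, rfl⟩ := hu
  exact ⟨⟨⟨u, hx⟩, ⟨↑u⁻¹, S.inv_mem_even hx⟩, Subtype.ext u.mul_inv, Subtype.ext u.inv_mul⟩, rfl⟩

theorem coe_det_res_lowerTriangular_fin_two {x w : A} (z : A) (hx : x ∈ S.even)
    (hw : w ∈ S.even) : ((S.res !![x, 0; z, w]).det : A) = x * w := by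
  simp [SuperComm.res, det_fin_two, hx, hw, S.even.zero_mem]

end SuperComm

theorem berezinian_ramond_change_of_basis_general {A : Type*} [Ring A] (S : SuperComm A)
    (a b b' p p' l : A)
    (ha : a ∈ S.even) (hb : b ∈ S.even)
    (hp : p ∈ S.odd) (hl : l ∈ S.odd)
    (hau : IsUnit a) (hbsq : b ^ 2 = 1) (hlp : l * p = 0) :
    IsUnit (Matrix.fromBlocks !![(1 : A), 0; 0, a] !![p, 0; p', a * p]
        !![(0 : A), 0; 0, l] !![b, 0; b', a * b]) ∧
    (S.res (!![(1 : A), 0; 0, a] -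
          !![p, 0; p', a * p] * Ring.inverse !![b, 0; b', a * b] * !![(0 : A), 0; 0, l])).det *
        Ring.inverse ((S.res !![b, 0; b', a * b]).det) = 1 := by
  obtain ⟨α, rfl⟩ := hau
  have hbb : b * b = 1 := by rw [← sq, hbsq]
  let β : Aˣ := ⟨b, b, hbb, hbb⟩
  let T := unitOfLowerTriangularFinTwo β (α * β) b'
  have hinvT : Ring.inverse !![b, 0; b', ↑α * b] = ↑T⁻¹ := Ring.inverse_unit T
  have hQTR :
      !![p, 0; p', ↑α * p] * Ring.inverse !![b, 0; b', ↑α * b] * !![(0 : A), 0; 0, l] = 0 := by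
    have hpl : p * l = 0 := by rw [S.odd_anticomm p hp l hl, hlp, neg_zero]
    have hc : (↑β⁻¹ * ↑α⁻¹ : A) ∈ S.even := S.even.mul_mem hb (S.inv_mem_even ha)
    have hentry : ↑α * p * (↑β⁻¹ * ↑α⁻¹) * l = 0 := by
      rw [mul_assoc (α : A) p, ← (S.commute_of_mem_even hc p).eq, mul_assoc, mul_assoc, hpl,
        mul_zero, mul_zero]
    rw [hinvT]
    ext i j
    fin_cases i <;> fin_cases j <;> simp [T, unitOfLowerTriangularFinTwo, mul_apply, hentry]
  have hdetP : (S.res !![(1 : A), 0; 0, ↑α]).det = ⟨α, ha⟩ :=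
    Subtype.ext <| by rw [S.coe_det_res_lowerTriangular_fin_two _ S.even.one_mem ha, one_mul]
  have hdetS : (S.res !![b, 0; b', ↑α * b]).det = ⟨α, ha⟩ :=
    Subtype.ext <| by
      rw [S.coe_det_res_lowerTriangular_fin_two _ hb (S.even.mul_mem ha hb),
        (S.commute_of_mem_even hb _).left_comm, hbb, mul_one]
  refine ⟨isUnit_fromBlocks_of_isUnit_schur T.isUnit ?_, ?_⟩
  · rw [hQTR, sub_zero]
    exact (unitOfLowerTriangularFinTwo 1 α 0).isUnit
  · rw [hQTR, sub_zero, hdetP, hdetS]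
    exact Ring.mul_inverse_cancel _ (S.isUnit_mk_of_isUnit ha α.isUnit)

/-- let `a, b, b' ∈ A₀` with `a` invertible and `b² = 1`, and `p, p', l ∈ A₁`
with `l * p = 0`. Then the even supermatrix of format `2|2`
`M = [[P,Q],[R,S]]` with `P = [[1,0],[0,a]]`, `Q = [[p,0],[p',a*p]]`, `R = [[0,0],[0,l]]`,
`S = [[b,0],[b',a*b]]` is invertible and `Ber M = det (P - Q * S⁻¹ * R) * (det S)⁻¹ = 1`. -/
theorem berezinian_ramond_change_of_basis {A : Type*} [Ring A] (S : SuperComm A)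
    (a b b' p p' l : A)
    (ha : a ∈ S.even) (hb : b ∈ S.even) (hb' : b' ∈ S.even)
    (hp : p ∈ S.odd) (hp' : p' ∈ S.odd) (hl : l ∈ S.odd)
    (hau : IsUnit a) (hbsq : b ^ 2 = 1) (hlp : l * p = 0) :
    IsUnit (Matrix.fromBlocks !![(1 : A), 0; 0, a] !![p, 0; p', a * p]
        !![(0 : A), 0; 0, l] !![b, 0; b', a * b]) ∧
    (S.res (!![(1 : A), 0; 0, a] -
          !![p, 0; p', a * p] * Ring.inverse !![b, 0; b', a * b] * !![(0 : A), 0; 0, l])).det *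
        Ring.inverse ((S.res !![b, 0; b', a * b]).det) = 1 :=
  berezinian_ramond_change_of_basis_general S a b b' p p' l ha hb hp hl hau hbsq hlp
end
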